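/- arXiv:1303.0506 — 2 statements merged into one kernel-verified Lean document; each statement's English description precedes it below -/
import Mathlib

section
/- Let f(z) = z + a_{n+1} z^{n+1} + ... be analytic on the closed unit disk, let α ≠ 1 be complex and ρ > 1 real, and set M_α = max_{z ∈ U} |f'(z) − α| (assuming f'(0) = 1). If |z f''(z)/f'(z)| < |1−α| n ρ / (1 + |1−α| ρ) for all z ∈ U, then |f'(z) − 1| < ρ M_α for all z ∈ U. -/
/-!
Put `F = f'`. Near a zero of `F` the logarithmic derivative `F'/F` has a pole, so the bound on
`z F'/F` forces `F ≠ 0` on the disk, and `F = exp G` with `G 0 = 0`, `G' = F'/F`. The vanishing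
Taylor coefficients give `F' = z ^ (n - 1) v`, so `z F'/F = z ^ n (v/F)`; by the maximum principle
`|v/F| ≤ c := |1 - α| n ρ / (1 + |1 - α| ρ)`, hence `|G'(z)| ≤ c |z| ^ (n - 1)` and
`|G z| ≤ c |z| ^ n / n < x / (1 + x)` with `x = |1 - α| ρ`. Finally
`|F z - 1| ≤ e ^ |G z| - 1 < e ^ (x / (1 + x)) - 1 ≤ x ≤ ρ M`, the last step because
`M ≥ |f'(0) - α| = |1 - α|`.
-/

open Complex Metric Filter Set Topology

theorem AnalyticAt.tendsto_logDeriv_cobounded {𝕜 : Type*} [NontriviallyNormedField 𝕜]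
    [CharZero 𝕜] [CompleteSpace 𝕜] {f : 𝕜 → 𝕜} {x : 𝕜}
    (hf : AnalyticAt 𝕜 f x) (hx : f x = 0) (hne : ¬∀ᶠ z in 𝓝 x, f z = 0) :
    Tendsto (logDeriv f) (𝓝[≠] x) (Bornology.cobounded 𝕜) := by
  have h0 : analyticOrderAt f x ≠ 0 := hf.analyticOrderAt_ne_zero.mpr hx
  have htop : analyticOrderAt f x ≠ ⊤ := fun h => hne (analyticOrderAt_eq_top.mp h)
  refine tendsto_cobounded_of_meromorphicOrderAt_neg ?_
  rw [meromorphicOrderAt_logDeriv_eq_neg_one hf.meromorphicAt]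
  · decide
  · simpa [hf.meromorphicOrderAt_eq] using h0
  · simpa [hf.meromorphicOrderAt_eq] using htop

theorem AnalyticOnNhd.ne_zero_of_norm_mul_logDeriv_le {F : ℂ → ℂ} {R c : ℝ}
    (hF : AnalyticOnNhd ℂ F (ball 0 R)) (hF0 : F 0 ≠ 0)
    (hc : ∀ z ∈ ball (0 : ℂ) R, ‖z * logDeriv F z‖ ≤ c) :
    ∀ z ∈ ball (0 : ℂ) R, F z ≠ 0 := by
  intro z₀ hz₀ hFz₀
  have hz₀0 : z₀ ≠ 0 := by rintro rfl; exact hF0 hFz₀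
  have hne : ¬∀ᶠ z in 𝓝 z₀, F z = 0 := fun hev =>
    hF0 (hF.eqOn_zero_of_preconnected_of_eventuallyEq_zero (convex_ball 0 R).isPreconnected
      hz₀ hev (mem_ball_self (pos_of_mem_ball hz₀)))
  have hlim : Tendsto (fun z => ‖z * logDeriv F z‖) (𝓝[≠] z₀) atTop := by
    simp only [norm_mul]
    exact Tendsto.pos_mul_atTop (norm_pos_iff.mpr hz₀0)
      ((continuous_norm.tendsto z₀).mono_left nhdsWithin_le_nhds)
      (tendsto_norm_cobounded_atTop.comp ((hF z₀ hz₀).tendsto_logDeriv_cobounded hFz₀ hne))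
  obtain ⟨z, hzc, hzR⟩ := ((hlim.eventually_gt_atTop c).and
    (nhdsWithin_le_nhds (isOpen_ball.mem_nhds hz₀))).exists
  exact (hc z hzR).not_gt hzc

theorem exists_eq_pow_mul_of_iteratedDeriv_eq_zero {u : ℂ → ℂ} {s : Set ℂ} (hs : IsOpen s)
    (hu : DifferentiableOn ℂ u s) (hu0 : AnalyticAt ℂ u 0) {m : ℕ}
    (hm : ∀ j < m, iteratedDeriv j u 0 = 0) :
    ∃ v : ℂ → ℂ, DifferentiableOn ℂ v s ∧ ∀ z, u z = z ^ m * v z := by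
  obtain ⟨v, hv0, huv⟩ := hu0.exists_eq_sum_add_pow_mul m
  have hsum : ∀ z : ℂ, ∑ i ∈ Finset.range m, (z ^ i / i.factorial) • iteratedDeriv i u 0 = 0 :=
    fun z => Finset.sum_eq_zero fun j hj => by rw [hm j (Finset.mem_range.mp hj), smul_zero]
  replace huv : ∀ z, u z = z ^ m * v z := fun z => by rw [huv z, hsum z, zero_add, smul_eq_mul]
  refine ⟨v, fun z hz => ?_, huv⟩
  rcases eq_or_ne z 0 with rfl | hz0
  · exact hv0.differentiableAt.differentiableWithinAt
  · have hdiv : (fun w => u w / w ^ m) =ᶠ[𝓝 z] v := by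
      filter_upwards [eventually_ne_nhds hz0] with w hw
      rw [huv w, mul_div_cancel_left₀ _ (pow_ne_zero m hw)]
    exact (((hu.differentiableAt (hs.mem_nhds hz)).div (differentiableAt_pow m)
      (pow_ne_zero m hz0)).congr_of_eventuallyEq hdiv.symm).differentiableWithinAt

theorem norm_le_div_of_norm_mul_le {g : ℂ → ℂ} {R c : ℝ}
    (hg : DifferentiableOn ℂ g (ball 0 R)) (hb : ∀ w ∈ ball (0 : ℂ) R, ‖w * g w‖ ≤ c)
    {w : ℂ} (hw : w ∈ ball (0 : ℂ) R) : ‖g w‖ ≤ c / R := by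
  have hd : DifferentiableOn ℂ (fun w => w * g w) (ball 0 R) := differentiableOn_id.mul hg
  have hmaps : MapsTo (fun w => w * g w) (ball 0 R) (closedBall ((0 : ℂ) * g 0) c) :=
    fun w hw => by simpa using hb w hw
  have hslope : dslope (fun w => w * g w) 0 w = g w := by
    rcases eq_or_ne w 0 with rfl | hw0
    · rw [dslope_same]
      have := (hasDerivAt_id' (0 : ℂ)).fun_mul
        (hg.differentiableAt (ball_mem_nhds 0 (pos_of_mem_ball hw))).hasDerivAt
      simpa using this.deriv
    · rw [dslope_of_ne _ hw0, slope_def_field]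
      simp only [zero_mul, sub_zero]
      field_simp
  rw [← hslope]
  exact norm_dslope_le_div_of_mapsTo_ball hd hmaps hw

theorem norm_le_div_pow_of_norm_pow_mul_le {W : ℂ → ℂ} {R : ℝ}
    (hW : DifferentiableOn ℂ W (ball 0 R)) (N : ℕ) {c : ℝ}
    (hb : ∀ w ∈ ball (0 : ℂ) R, ‖w ^ N * W w‖ ≤ c) {w : ℂ} (hw : w ∈ ball (0 : ℂ) R) :
    ‖W w‖ ≤ c / R ^ N := by
  induction N generalizing c with
  | zero => simpa using hb w hw
  | succ N ih =>
    have hg : DifferentiableOn ℂ (fun w => w ^ N * W w) (ball 0 R) :=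
      (differentiableOn_pow N).mul hW
    have hN := fun w (hw : w ∈ ball (0 : ℂ) R) => norm_le_div_of_norm_mul_le hg
      (fun w hw => by simpa only [pow_succ', mul_assoc] using hb w hw) hw
    simpa only [div_div, pow_succ'] using ih hN

theorem norm_logDeriv_le_of_deriv_eq_pow_mul {F v : ℂ → ℂ} {R c : ℝ} {k : ℕ}
    (hF : DifferentiableOn ℂ F (ball 0 R)) (hne : ∀ z ∈ ball (0 : ℂ) R, F z ≠ 0)
    (hv : DifferentiableOn ℂ v (ball 0 R)) (hFv : ∀ z ∈ ball (0 : ℂ) R, deriv F z = z ^ k * v z)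
    (hb : ∀ z ∈ ball (0 : ℂ) R, ‖z * logDeriv F z‖ ≤ c) {z : ℂ} (hz : z ∈ ball (0 : ℂ) R) :
    ‖logDeriv F z‖ ≤ c / R ^ (k + 1) * ‖z‖ ^ k := by
  have hlog : ∀ w ∈ ball (0 : ℂ) R, logDeriv F w = w ^ k * (v w / F w) := fun w hw => by
    rw [logDeriv_apply, hFv w hw, mul_div_assoc]
  have hW := norm_le_div_pow_of_norm_pow_mul_le (W := fun w => v w / F w) (hv.div hF hne) (k + 1)
    (fun w hw => by simpa only [hlog w hw, pow_succ', mul_assoc] using hb w hw) hz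
  rw [hlog z hz, norm_mul, norm_pow, mul_comm]
  gcongr

theorem exists_eqOn_exp_of_ne_zero {F : ℂ → ℂ} {R : ℝ} (hF : DifferentiableOn ℂ F (ball 0 R))
    (hF0 : F 0 = 1) (hne : ∀ z ∈ ball (0 : ℂ) R, F z ≠ 0) :
    ∃ G : ℂ → ℂ, G 0 = 0 ∧ (∀ z ∈ ball (0 : ℂ) R, HasDerivAt G (logDeriv F z) z) ∧
      EqOn F (exp ∘ G) (ball 0 R) := by
  have hlog : DifferentiableOn ℂ (logDeriv F) (ball 0 R) :=
    (hF.deriv isOpen_ball).div hF hne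
  obtain ⟨G, hG0, hG⟩ := hlog.isExactOn_ball.with_val_at 0 0
  refine ⟨G, hG0, hG, ?_⟩
  have hexp : DifferentiableOn ℂ (exp ∘ G) (ball 0 R) := fun z hz =>
    (hG z hz).differentiableAt.cexp.differentiableWithinAt
  have hlogeq : EqOn (logDeriv F) (logDeriv (exp ∘ G)) (ball 0 R) := fun z hz => by
    rw [logDeriv_apply (exp ∘ G), Function.comp_def, (hG z hz).cexp.deriv,
      mul_div_cancel_left₀ _ (exp_ne_zero _)]
  obtain ⟨a, -, ha⟩ := (logDeriv_eqOn_iff hF hexp isOpen_ball (convex_ball 0 R).isPreconnected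
    (fun z _ => exp_ne_zero _) hne).mp hlogeq
  rcases (ball (0 : ℂ) R).eq_empty_or_nonempty with hR | ⟨z, hz⟩
  · simp [hR]
  have ha1 : a = 1 := by
    simpa [hF0, hG0] using (ha (mem_ball_self (pos_of_mem_ball hz))).symm
  simpa [ha1] using ha

theorem norm_le_of_norm_hasDerivAt_le_mul_pow {G g : ℂ → ℂ} {R C : ℝ} {k : ℕ}
    (hG : ∀ w ∈ ball (0 : ℂ) R, HasDerivAt G (g w) w) (hG0 : G 0 = 0)
    (hb : ∀ w ∈ ball (0 : ℂ) R, ‖g w‖ ≤ C * ‖w‖ ^ k) {z : ℂ} (hz : z ∈ ball (0 : ℂ) R) :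
    ‖G z‖ ≤ C * ‖z‖ ^ (k + 1) / (k + 1) := by
  have hseg : ∀ t ∈ Icc (0 : ℝ) 1, (t : ℂ) * z ∈ ball (0 : ℂ) R := fun t ht => by
    rw [mem_ball_zero_iff, norm_mul, norm_real, Real.norm_of_nonneg ht.1]
    exact (mul_le_of_le_one_left (norm_nonneg z) ht.2).trans_lt (mem_ball_zero_iff.mp hz)
  have hφ : ∀ t ∈ Icc (0 : ℝ) 1,
      HasDerivAt (fun t : ℝ => G (t * z)) (g (t * z) * z) t := fun t ht =>
    ((hG _ (hseg t ht)).comp (t : ℂ) (hasDerivAt_mul_const z)).comp_ofReal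
  have hB : ∀ t : ℝ, HasDerivAt (fun t => C * ‖z‖ ^ (k + 1) * t ^ (k + 1) / (k + 1))
      (C * ‖z‖ ^ (k + 1) * t ^ k) t := fun t => by
    refine (((hasDerivAt_pow (k + 1) t).const_mul (C * ‖z‖ ^ (k + 1))).div_const
      ((k : ℝ) + 1)).congr_deriv ?_
    rw [Nat.add_sub_cancel]
    push_cast
    field_simp
  have hbound := image_norm_le_of_norm_deriv_right_le_deriv_boundary
    (f := fun t : ℝ => G (t * z)) (a := 0) (b := 1)
    (fun t ht => (hφ t ht).continuousAt.continuousWithinAt)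
    (fun t ht => (hφ t (Ico_subset_Icc_self ht)).hasDerivWithinAt) (by simp [hG0]) hB
    (fun t ht => ?_) (right_mem_Icc.mpr zero_le_one)
  · simpa using hbound
  · have ht := Ico_subset_Icc_self ht
    calc ‖g (t * z) * z‖ ≤ C * ‖(t : ℂ) * z‖ ^ k * ‖z‖ := by
          rw [norm_mul]; gcongr; exact hb _ (hseg t ht)
      _ = C * ‖z‖ ^ (k + 1) * t ^ k := by
          rw [norm_mul, norm_real, Real.norm_of_nonneg ht.1]; ring

theorem norm_exp_sub_one_lt_of_norm_lt {w : ℂ} {x : ℝ} (hx : 0 ≤ x) (hw : ‖w‖ < x / (1 + x)) :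
    ‖exp w - 1‖ < x := by
  have hexp : Real.exp (x / (1 + x)) ≤ 1 + x := by
    refine (Real.le_log_iff_exp_le (by positivity)).mp ?_
    convert Real.one_sub_inv_le_log_of_pos (by positivity : 0 < 1 + x) using 1
    field_simp
    ring
  calc ‖exp w - 1‖ ≤ Real.exp ‖w‖ - 1 := by
        simpa using norm_exp_sub_sum_le_exp_norm_sub_sum w 1
    _ < Real.exp (x / (1 + x)) - 1 := by gcongr
    _ ≤ x := by linarith

theorem cor1_1_general (n : ℕ) (f : ℂ → ℂ)
    (hf : AnalyticOn ℂ f (closedBall (0 : ℂ) 1))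
    (hf'0 : deriv f 0 = 1)
    (hcoef : ∀ k, 2 ≤ k → k ≤ n → iteratedDeriv k f 0 = 0)
    (α : ℂ)
    (ρ : ℝ) (hρ : 1 < ρ)
    (M : ℝ) (hM : IsLUB ((fun z => ‖deriv f z - α‖) '' ball (0 : ℂ) 1) M)
    (h : ∀ z ∈ ball (0 : ℂ) 1,
      ‖z * deriv (deriv f) z / deriv f z‖ <
        ‖1 - α‖ * n * ρ / (1 + ‖1 - α‖ * ρ)) :
    ∀ z ∈ ball (0 : ℂ) 1, ‖deriv f z - 1‖ < ρ * M := by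
  set x := ‖1 - α‖ * ρ with hx
  set c := ‖1 - α‖ * n * ρ / (1 + x) with hc_def
  have hlog : ∀ z ∈ ball (0 : ℂ) 1, ‖z * logDeriv (deriv f) z‖ ≤ c := fun z hz => by
    simpa only [logDeriv_apply, mul_div_assoc] using (h z hz).le
  have hc : 0 < c := by simpa using h 0 (mem_ball_self one_pos)
  obtain ⟨k, rfl⟩ : ∃ k, n = k + 1 :=
    Nat.exists_eq_succ_of_ne_zero (by rintro rfl; simp [hc_def] at hc)
  have hfa : AnalyticOnNhd ℂ (deriv f) (ball 0 1) :=
    (isOpen_ball.analyticOn_iff_analyticOnNhd.mp (hf.mono ball_subset_closedBall)).deriv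
  have hne := hfa.ne_zero_of_norm_mul_logDeriv_le (by simp [hf'0]) hlog
  obtain ⟨v, hv, hfv⟩ := exists_eq_pow_mul_of_iteratedDeriv_eq_zero (m := k) isOpen_ball
    hfa.deriv.differentiableOn (hfa.deriv 0 (mem_ball_self one_pos)) fun j hj => by
      rw [← iteratedDeriv_succ', ← iteratedDeriv_succ']
      exact hcoef (j + 2) (by omega) (by omega)
  obtain ⟨G, hG0, hG, hfG⟩ := exists_eqOn_exp_of_ne_zero hfa.differentiableOn hf'0 hne
  have hxM : x ≤ ρ * M := by
    rw [hx, mul_comm ρ]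
    gcongr
    exact hM.1 ⟨0, mem_ball_self one_pos, by simp [hf'0]⟩
  intro z hz
  have hGz : ‖G z‖ < x / (1 + x) := calc
    ‖G z‖ ≤ c / 1 ^ (k + 1) * ‖z‖ ^ (k + 1) / (k + 1) :=
      norm_le_of_norm_hasDerivAt_le_mul_pow hG hG0 (fun w hw =>
        norm_logDeriv_le_of_deriv_eq_pow_mul hfa.differentiableOn hne hv (fun w _ => hfv w)
          hlog hw) hz
    _ < c / (k + 1) := by
      rw [one_pow, div_one]
      gcongr
      exact mul_lt_of_lt_one_right hc
        (pow_lt_one₀ (norm_nonneg z) (mem_ball_zero_iff.mp hz) (by omega))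
    _ = x / (1 + x) := by
      rw [hc_def, hx]
      push_cast
      field_simp
  rw [hfG hz]
  exact (norm_exp_sub_one_lt_of_norm_lt (by positivity) hGz).trans_le hxM

theorem cor1_1 (n : ℕ) (hn : 1 ≤ n) (f : ℂ → ℂ)
    (hf : AnalyticOn ℂ f (closedBall (0 : ℂ) 1))
    (hf0 : f 0 = 0) (hf'0 : deriv f 0 = 1)
    (hcoef : ∀ k, 2 ≤ k → k ≤ n → iteratedDeriv k f 0 = 0)
    (α : ℂ) (hα : α ≠ 1)
    (ρ : ℝ) (hρ : 1 < ρ)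
    (M : ℝ) (hM : IsLUB ((fun z => ‖deriv f z - α‖) '' ball (0 : ℂ) 1) M)
    (h : ∀ z ∈ ball (0 : ℂ) 1,
      ‖z * deriv (deriv f) z / deriv f z‖ <
        ‖1 - α‖ * n * ρ / (1 + ‖1 - α‖ * ρ)) :
    ∀ z ∈ ball (0 : ℂ) 1, ‖deriv f z - 1‖ < ρ * M :=
  cor1_1_general n f hf hf'0 hcoef α ρ hρ M hM h
end

section
/- Let w be analytic on the open unit disk U with a zero of order at least n ≥ 1 at 0, and let ρ > 1. If for every z ∈ U with w(z) ≠ 0 and every real k ≥ n one has z w'(z)/w(z) ≠ k, then |w(z)| < ρ for all z ∈ U. -/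
/-!
Suppose `|w(a)| ≥ ρ > 0` for some `a`, and pick `|a| < r < 1`. Let `z₀` be a point of the circle
`|z| = r` where `|w|` attains its maximum over the closed disk `|z| ≤ r`. Writing `w = zⁿ g`, the
maximum principle shows that `|g|` also peaks over that disk at `z₀`. There the tangential
derivative of `|g|²` vanishes and its inward radial derivative is nonpositive, so `z₀ g'(z₀)/g(z₀)`
is a nonnegative real number; hence `z₀ w'(z₀)/w(z₀) = n + z₀ g'(z₀)/g(z₀)` is a real number `≥ n`.
-/

open Complex Metric Filter Set ComplexConjugate

theorem AnalyticOnNhd.exists_eq_pow_smul_of_iteratedDeriv_eq_zero {𝕜 E : Type*}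
    [NontriviallyNormedField 𝕜] [CharZero 𝕜] [NormedAddCommGroup E] [NormedSpace 𝕜 E]
    [CompleteSpace E] {f : 𝕜 → E} {s : Set 𝕜} {n : ℕ} (hf : AnalyticOnNhd 𝕜 f s) (hs : 0 ∈ s)
    (hzero : ∀ k < n, iteratedDeriv k f 0 = 0) :
    ∃ g : 𝕜 → E, AnalyticOnNhd 𝕜 g s ∧ ∀ z, f z = z ^ n • g z := by
  obtain ⟨g, hg0, hfg⟩ := (hf 0 hs).exists_eq_sum_add_pow_mul n
  have hfg' (z : 𝕜) : f z = z ^ n • g z := by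
    rw [hfg, Finset.sum_eq_zero fun i hi ↦ by rw [hzero i (Finset.mem_range.1 hi), smul_zero],
      zero_add]
  refine ⟨g, fun z hz ↦ ?_, hfg'⟩
  rcases eq_or_ne z 0 with rfl | hz0
  · exact hg0
  · have hpow : AnalyticAt 𝕜 (fun y : 𝕜 ↦ (y ^ n)⁻¹) z :=
      (analyticAt_id.pow n).inv (pow_ne_zero n hz0)
    refine (hpow.smul (hf z hz)).congr ?_
    filter_upwards [eventually_ne_nhds hz0] with y hy
    show (y ^ n)⁻¹ • f y = g y
    rw [hfg' y, inv_smul_smul₀ (pow_ne_zero n hy)]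

theorem hasDerivAt_norm_sq_comp {f : ℂ → ℂ} {γ : ℝ → ℂ} {v : ℂ} {t : ℝ}
    (hf : DifferentiableAt ℂ f (γ t)) (hγ : HasDerivAt γ v t) :
    HasDerivAt (fun τ ↦ ‖f (γ τ)‖ ^ 2) (2 * ‖f (γ t)‖ ^ 2 * (v * logDeriv f (γ t)).re) t := by
  refine (hf.hasDerivAt.comp t hγ).norm_sq.congr_deriv ?_
  rw [Complex.inner, Function.comp_apply, logDeriv_apply]
  rcases eq_or_ne (f (γ t)) 0 with h | h
  · simp [h]
  · rw [show deriv f (γ t) * v * conj (f (γ t)) =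
        ((‖f (γ t)‖ ^ 2 : ℝ) : ℂ) * (v * (deriv f (γ t) / f (γ t))) by
      rw [ofReal_pow, ← conj_mul']; field_simp, re_ofReal_mul]
    ring

theorem im_mul_logDeriv_eq_zero_of_isMaxOn_sphere {f : ℂ → ℂ} {z : ℂ}
    (hf : DifferentiableAt ℂ f z) (hmax : IsMaxOn (‖f ·‖) (sphere 0 ‖z‖) z) :
    (z * logDeriv f z).im = 0 := by
  set γ : ℝ → ℂ := fun θ ↦ z * exp (θ * I)
  have hγ0 : γ 0 = z := by simp [γ]
  have hγ : HasDerivAt γ (z * I) 0 := by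
    simpa [γ] using ((hasDerivAt_id (0 : ℝ)).ofReal_comp.mul_const I).cexp.const_mul z
  have hmaxγ : IsLocalMax (fun θ ↦ ‖f (γ θ)‖ ^ 2) 0 := Eventually.of_forall fun θ ↦ by
    have hθ : γ θ ∈ sphere (0 : ℂ) ‖z‖ := by simp [γ, norm_exp_ofReal_mul_I]
    show ‖f (γ θ)‖ ^ 2 ≤ ‖f (γ 0)‖ ^ 2
    rw [hγ0]
    gcongr
    exact hmax hθ
  have hderiv := hmaxγ.hasDerivAt_eq_zero (hasDerivAt_norm_sq_comp (hγ0 ▸ hf) hγ)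
  rcases eq_or_ne (f z) 0 with h | h
  · simp [logDeriv_apply, h]
  · have hre : (z * logDeriv f z * I).re = 0 := by
      simpa [hγ0, h, mul_right_comm z I] using hderiv
    rwa [mul_I_re, neg_eq_zero] at hre

theorem re_mul_logDeriv_nonneg_of_isMaxOn_closedBall {f : ℂ → ℂ} {z : ℂ}
    (hf : DifferentiableAt ℂ f z) (hmax : IsMaxOn (‖f ·‖) (closedBall 0 ‖z‖) z) :
    0 ≤ (z * logDeriv f z).re := by
  set γ : ℝ → ℂ := fun t ↦ t * z
  have hγ1 : γ 1 = z := by simp [γ]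
  have hγ : HasDerivAt γ z 1 := by
    simpa using (hasDerivAt_id (1 : ℝ)).ofReal_comp.mul_const z
  have hmaxγ : IsLocalMaxOn (fun t ↦ ‖f (γ t)‖ ^ 2) (Icc 0 1) 1 := by
    refine IsMaxOn.localize fun t ht ↦ ?_
    have ht' : γ t ∈ closedBall (0 : ℂ) ‖z‖ := by
      simpa [γ, abs_of_nonneg ht.1] using mul_le_of_le_one_left (norm_nonneg z) ht.2
    show ‖f (γ t)‖ ^ 2 ≤ ‖f (γ 1)‖ ^ 2
    rw [hγ1]
    gcongr
    exact hmax ht'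
  have hseg : (-1 : ℝ) ∈ posTangentConeAt (Icc 0 1) 1 :=
    mem_posTangentConeAt_of_segment_subset <| (convex_Icc 0 1).segment_subset
      (by norm_num) (by norm_num)
  have hnonpos := hmaxγ.hasFDerivWithinAt_nonpos
    (hasDerivAt_norm_sq_comp (hγ1 ▸ hf) hγ).hasDerivWithinAt.hasFDerivWithinAt hseg
  rw [ContinuousLinearMap.toSpanSingleton_apply, hγ1, neg_one_smul, neg_nonpos] at hnonpos
  rcases eq_or_ne (f z) 0 with h | h
  · simp [logDeriv_apply, h]
  · exact (mul_nonneg_iff_of_pos_left (by positivity)).1 hnonpos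

theorem isMaxOn_closedBall_of_isMaxOn_sphere_of_eq_pow_mul {w g : ℂ → ℂ} {n : ℕ} {z₀ : ℂ}
    (hwg : ∀ z, w z = z ^ n * g z) (hz₀ : z₀ ≠ 0) (hg : DiffContOnCl ℂ g (ball 0 ‖z₀‖))
    (hmax : IsMaxOn (‖w ·‖) (sphere 0 ‖z₀‖) z₀) :
    IsMaxOn (‖g ·‖) (closedBall 0 ‖z₀‖) z₀ := by
  have hr : ‖z₀‖ ≠ 0 := norm_ne_zero_iff.2 hz₀
  intro z hz
  rw [← closure_ball 0 hr] at hz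
  refine Complex.norm_le_of_forall_mem_frontier_norm_le isBounded_ball hg (fun ζ hζ ↦ ?_) hz
  rw [frontier_ball 0 hr] at hζ
  have hζw : ‖w ζ‖ ≤ ‖w z₀‖ := hmax hζ
  rw [hwg, hwg, norm_mul, norm_mul, norm_pow, norm_pow, mem_sphere_zero_iff_norm.1 hζ] at hζw
  exact le_of_mul_le_mul_left hζw (by positivity)

theorem mul_logDeriv_pow_mul {g : ℂ → ℂ} {z : ℂ} (n : ℕ) (hz : z ≠ 0) (hgz : g z ≠ 0)
    (hg : DifferentiableAt ℂ g z) :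
    z * logDeriv (fun z ↦ z ^ n * g z) z = n + z * logDeriv g z := by
  rw [logDeriv_mul (f := (· ^ n)) z (pow_ne_zero n hz) hgz (differentiableAt_pow n) hg,
    logDeriv_pow]
  field_simp

theorem exists_real_ge_eq_mul_logDeriv_of_isMaxOn_sphere {w g : ℂ → ℂ} {n : ℕ} {R : ℝ}
    {z₀ : ℂ} (hwg : ∀ z, w z = z ^ n * g z) (hg : DifferentiableOn ℂ g (ball 0 R))
    (hz₀ : z₀ ≠ 0) (hz₀R : ‖z₀‖ < R) (hwz₀ : w z₀ ≠ 0)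
    (hmax : IsMaxOn (‖w ·‖) (sphere 0 ‖z₀‖) z₀) :
    ∃ k : ℝ, n ≤ k ∧ z₀ * logDeriv w z₀ = k := by
  have hsub : closedBall (0 : ℂ) ‖z₀‖ ⊆ ball 0 R := closedBall_subset_ball hz₀R
  have hgz₀ : g z₀ ≠ 0 := right_ne_zero_of_mul (hwg z₀ ▸ hwz₀)
  have hgz₀' : DifferentiableAt ℂ g z₀ :=
    hg.differentiableAt (isOpen_ball.mem_nhds (hsub (by simp)))
  have hgmax := isMaxOn_closedBall_of_isMaxOn_sphere_of_eq_pow_mul hwg hz₀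
    (hg.mono (closure_ball (0 : ℂ) (norm_ne_zero_iff.2 hz₀) ▸ hsub)).diffContOnCl hmax
  have hre := re_mul_logDeriv_nonneg_of_isMaxOn_closedBall hgz₀' hgmax
  have him := im_mul_logDeriv_eq_zero_of_isMaxOn_sphere hgz₀'
    (hgmax.on_subset sphere_subset_closedBall)
  refine ⟨n + (z₀ * logDeriv g z₀).re, by linarith, ?_⟩
  rw [funext hwg, mul_logDeriv_pow_mul n hz₀ hgz₀ hgz₀']
  apply Complex.ext <;> simp [him]

theorem core4_general (n : ℕ) (w : ℂ → ℂ)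
    (hw : AnalyticOn ℂ w (ball (0 : ℂ) 1))
    (hzero : ∀ k < n, iteratedDeriv k w 0 = 0)
    (ρ : ℝ) (hρ : 1 < ρ)
    (h : ∀ z ∈ ball (0 : ℂ) 1, w z ≠ 0 →
      ∀ k : ℝ, (n : ℝ) ≤ k → z * deriv w z / w z ≠ (k : ℂ)) :
    ∀ z ∈ ball (0 : ℂ) 1, ‖w z‖ < ρ := by
  intro a ha
  by_contra! hρa
  have hw' : AnalyticOnNhd ℂ w (ball 0 1) := isOpen_ball.analyticOn_iff_analyticOnNhd.1 hw
  obtain ⟨g, hg, hwg⟩ :=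
    hw'.exists_eq_pow_smul_of_iteratedDeriv_eq_zero (mem_ball_self one_pos) hzero
  obtain ⟨r, har, hr1⟩ := exists_between (mem_ball_zero_iff.1 ha)
  have hr0 : 0 < r := (norm_nonneg a).trans_lt har
  obtain ⟨z₀, hz₀, hmax⟩ := exists_mem_frontier_isMaxOn_norm isBounded_ball
    (nonempty_ball.2 hr0) (hw'.differentiableOn.mono
      (closure_ball (0 : ℂ) hr0.ne' ▸ closedBall_subset_ball hr1)).diffContOnCl
  rw [frontier_ball 0 hr0.ne', mem_sphere_zero_iff_norm] at hz₀
  rw [closure_ball 0 hr0.ne', ← hz₀] at hmax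
  have hwz₀ : w z₀ ≠ 0 := by
    have haz₀ : ‖w a‖ ≤ ‖w z₀‖ := hmax (by rw [mem_closedBall_zero_iff, hz₀]; exact har.le)
    exact norm_pos_iff.1 (by linarith)
  obtain ⟨k, hk, hk₀⟩ := exists_real_ge_eq_mul_logDeriv_of_isMaxOn_sphere
    (fun z ↦ (hwg z).trans (smul_eq_mul _ _)) hg.differentiableOn
    (norm_pos_iff.1 (hz₀ ▸ hr0)) (hz₀ ▸ hr1) hwz₀ (hmax.on_subset sphere_subset_closedBall)
  exact h z₀ (mem_ball_zero_iff.2 (hz₀ ▸ hr1)) hwz₀ k hk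
    (by rwa [mul_div_assoc, ← logDeriv_apply])

theorem core4 (n : ℕ) (hn : 1 ≤ n) (w : ℂ → ℂ)
    (hw : AnalyticOn ℂ w (ball (0 : ℂ) 1))
    (hzero : ∀ k < n, iteratedDeriv k w 0 = 0)
    (ρ : ℝ) (hρ : 1 < ρ)
    (h : ∀ z ∈ ball (0 : ℂ) 1, w z ≠ 0 →
      ∀ k : ℝ, (n : ℝ) ≤ k → z * deriv w z / w z ≠ (k : ℂ)) :
    ∀ z ∈ ball (0 : ℂ) 1, ‖w z‖ < ρ :=
  core4_general n w hw hzero ρ hρ h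
end
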